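/- arXiv:2106.13211 — 2 statements merged into one kernel-verified Lean document; each statement's English description precedes it below -/
import Mathlib

section
/- The map F sending a vector x ∈ ℝ^d with 0 < κ₁ ≤ |x| ≤ κ₂ to the unit vector (1/γ)(x₁,…,x_d, x̃) ∈ ℝ^{d+1}, where x̃ = |x|/(1+|x|) and γ = (|x|² + x̃²)^{1/2}, is injective. -/
/-! The last coordinate of `F x` simplifies to `1 / √((1 + |x|)² + 1)`, which is strictly
decreasing in `|x|`; so `F x` determines `|x|`, hence `γ`, and then `x` itself. -/

open Real

lemma div_one_add_div_sqrt_eq {t : ℝ} (ht : 0 < t) :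
    t / (1 + t) / √(t ^ 2 + (t / (1 + t)) ^ 2) = 1 / √((1 + t) ^ 2 + 1) := by
  have hq : 0 < t / (1 + t) := by positivity
  have hsum : t ^ 2 + (t / (1 + t)) ^ 2 = (t / (1 + t)) ^ 2 * ((1 + t) ^ 2 + 1) := by
    field_simp
  rw [hsum, sqrt_mul (sq_nonneg _), sqrt_sq hq.le, div_mul_eq_div_div, div_self hq.ne']

lemma strictAntiOn_div_one_add_div_sqrt :
    StrictAntiOn (fun t : ℝ => t / (1 + t) / √(t ^ 2 + (t / (1 + t)) ^ 2)) (Set.Ioi 0) := by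
  intro s hs t ht hst
  simp only [div_one_add_div_sqrt_eq hs, div_one_add_div_sqrt_eq ht]
  have hs' : (0 : ℝ) < s := hs
  apply one_div_lt_one_div_of_lt (by positivity)
  gcongr

theorem stmt_0_general (d : ℕ) (κ₁ κ₂ : ℝ) (hκ₁ : 0 < κ₁)
    (F : EuclideanSpace ℝ (Fin d) → EuclideanSpace ℝ (Fin (d + 1)))
    (hF : ∀ x, F x = fun i : Fin (d + 1) =>
      if h : (i : ℕ) < d then
        x ⟨i, h⟩ / Real.sqrt (‖x‖ ^ 2 + (‖x‖ / (1 + ‖x‖)) ^ 2)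
      else (‖x‖ / (1 + ‖x‖)) / Real.sqrt (‖x‖ ^ 2 + (‖x‖ / (1 + ‖x‖)) ^ 2)) :
    Set.InjOn F {x | κ₁ ≤ ‖x‖ ∧ ‖x‖ ≤ κ₂} := by
  intro x hx y hy hxy
  have hcoord := fun i => congrFun (congrArg WithLp.ofLp hxy) i
  simp only [hF] at hcoord
  have hnorm : ‖x‖ = ‖y‖ :=
    strictAntiOn_div_one_add_div_sqrt.injOn (hκ₁.trans_le hx.1) (hκ₁.trans_le hy.1)
      (by simpa using hcoord (Fin.last d))
  have hγ : √(‖x‖ ^ 2 + (‖x‖ / (1 + ‖x‖)) ^ 2) ≠ 0 := by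
    have := hκ₁.trans_le hx.1
    positivity
  ext i
  have hi := hcoord i.castSucc
  simp only [Fin.val_castSucc, i.isLt, dif_pos, ← hnorm] at hi
  exact (div_left_inj' hγ).mp hi

theorem stmt_0 (d : ℕ) (hd : 1 ≤ d) (κ₁ κ₂ : ℝ) (hκ₁ : 0 < κ₁) (hκ : κ₁ ≤ κ₂)
    (F : EuclideanSpace ℝ (Fin d) → EuclideanSpace ℝ (Fin (d + 1)))
    (hF : ∀ x, F x = fun i : Fin (d + 1) =>
      if h : (i : ℕ) < d then
        x ⟨i, h⟩ / Real.sqrt (‖x‖ ^ 2 + (‖x‖ / (1 + ‖x‖)) ^ 2)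
      else (‖x‖ / (1 + ‖x‖)) / Real.sqrt (‖x‖ ^ 2 + (‖x‖ / (1 + ‖x‖)) ^ 2)) :
    Set.InjOn F {x | κ₁ ≤ ‖x‖ ∧ ‖x‖ ≤ κ₂} :=
  stmt_0_general d κ₁ κ₂ hκ₁ F hF
end

section
/- Parameter-shift rule: if f(θ) = ⟨ψ| e^{iθP/2} B e^{−iθP/2} |ψ⟩ where P is Hermitian with P² = I and B is Hermitian, then f'(θ) = (f(θ + π/2) − f(θ − π/2))/2. -/
/-!
Since `P² = 1`, `exp (z • I • P) = cos z • 1 + sin z • I • P`, so conjugating `B` by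
`exp (θ/2 • I • P)` and expanding with the half-angle formulas gives
`(B + PBP)/2 + cos θ • (B - PBP)/2 + sin θ • I (PB - BP)/2`.
Hence `f θ = a + c cos θ + d sin θ`, and for such a function the shifts by `± π/2` turn
`cos, sin` into `∓ sin, ± cos`, which is exactly the derivative.
-/

open Matrix

section Involution

variable {A : Type*} [Ring A] [Algebra ℂ A] [TopologicalSpace A] [IsTopologicalRing A]
  [ContinuousSMul ℂ A] [T2Space A] {P : A}

theorem exp_smul_eq_cosh_add_sinh_of_mul_self_eq_one (hP : P * P = 1) (z : ℂ) :
    NormedSpace.exp (z • P) = Complex.cosh z • (1 : A) + Complex.sinh z • P := by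
  have hP_even (k : ℕ) : P ^ (2 * k) = 1 := by rw [pow_mul, sq, hP, one_pow]
  rw [NormedSpace.exp_eq_tsum ℂ]
  refine HasSum.tsum_eq (HasSum.even_add_odd ?_ ?_)
  · simp only [smul_pow, hP_even, smul_smul, ← div_eq_inv_mul]
    exact (Complex.hasSum_cosh z).smul_const 1
  · simp only [pow_succ _ (2 * _), smul_pow, hP_even, smul_mul_smul, one_mul, smul_smul,
      ← div_eq_inv_mul]
    exact (Complex.hasSum_sinh z).smul_const P

theorem exp_smul_I_smul_eq_cos_add_sin_of_mul_self_eq_one (hP : P * P = 1) (z : ℂ) :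
    NormedSpace.exp (z • Complex.I • P) =
      Complex.cos z • (1 : A) + Complex.sin z • Complex.I • P := by
  rw [smul_smul, exp_smul_eq_cosh_add_sinh_of_mul_self_eq_one hP, Complex.cosh_mul_I,
    Complex.sinh_mul_I, mul_smul]

theorem exp_conj_eq_of_mul_self_eq_one (hP : P * P = 1) (B : A) (θ : ℂ) :
    NormedSpace.exp ((θ / 2) • Complex.I • P) * B * NormedSpace.exp ((-θ / 2) • Complex.I • P) =
      (2⁻¹ : ℂ) • (B + P * B * P) + Complex.cos θ • (2⁻¹ : ℂ) • (B - P * B * P) +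
        Complex.sin θ • (Complex.I / 2) • (P * B - B * P) := by
  obtain ⟨z, rfl⟩ : ∃ z, θ = 2 * z := ⟨θ / 2, by ring⟩
  rw [neg_div, mul_div_cancel_left₀ z two_ne_zero,
    exp_smul_I_smul_eq_cos_add_sin_of_mul_self_eq_one hP,
    exp_smul_I_smul_eq_cos_add_sin_of_mul_self_eq_one hP,
    Complex.cos_neg, Complex.sin_neg, Complex.cos_two_mul, Complex.sin_two_mul]
  simp only [add_mul, mul_add, smul_mul_assoc, mul_smul_comm, one_mul, mul_one, smul_add,
    smul_sub, neg_smul, mul_neg]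
  match_scalars
  · ring
  · ring
  · ring
  · linear_combination -Complex.sin z ^ 2 * Complex.I_sq + Complex.sin_sq_add_cos_sq z

end Involution

theorem hasDerivAt_parameterShift_of_eq_add_cos_add_sin {f : ℝ → ℝ} {a c d : ℝ}
    (hf : ∀ t, f t = a + Real.cos t * c + Real.sin t * d) (θ : ℝ) :
    HasDerivAt f ((f (θ + Real.pi / 2) - f (θ - Real.pi / 2)) / 2) θ := by
  have hderiv : HasDerivAt f (-Real.sin θ * c + Real.cos θ * d) θ := by
    rw [funext hf]
    exact (((Real.hasDerivAt_cos θ).mul_const c).const_add a).add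
      ((Real.hasDerivAt_sin θ).mul_const d)
  convert hderiv using 1
  simp only [hf, Real.cos_add_pi_div_two, Real.sin_add_pi_div_two, Real.cos_sub_pi_div_two,
    Real.sin_sub_pi_div_two]
  ring

theorem stmt_18_general (m : ℕ) (P B : Matrix (Fin m) (Fin m) ℂ)
    (hP2 : P * P = 1)
    (ψ : Fin m → ℂ)
    (f : ℝ → ℝ)
    (hf : ∀ θ : ℝ, (f θ : ℂ) = star ψ ⬝ᵥ
      ((NormedSpace.exp (((θ : ℂ) / 2) • (Complex.I • P)) * B *
        NormedSpace.exp ((-(θ : ℂ) / 2) • (Complex.I • P))) *ᵥ ψ))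
    (θ : ℝ) :
    HasDerivAt f ((f (θ + Real.pi / 2) - f (θ - Real.pi / 2)) / 2) θ := by
  let expect (M : Matrix (Fin m) (Fin m) ℂ) : ℂ := star ψ ⬝ᵥ (M *ᵥ ψ)
  refine hasDerivAt_parameterShift_of_eq_add_cos_add_sin
    (a := (expect ((2⁻¹ : ℂ) • (B + P * B * P))).re)
    (c := (expect ((2⁻¹ : ℂ) • (B - P * B * P))).re)
    (d := (expect ((Complex.I / 2) • (P * B - B * P))).re) (fun t ↦ ?_) θ
  have hft := congrArg Complex.re (hf t)
  rw [exp_conj_eq_of_mul_self_eq_one hP2] at hft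
  simpa [expect, Complex.cos_ofReal_re, Complex.sin_ofReal_re, add_mulVec, smul_mulVec,
    dotProduct_add, dotProduct_smul] using hft

theorem stmt_18 (m : ℕ) (P B : Matrix (Fin m) (Fin m) ℂ)
    (hP : P.IsHermitian) (hP2 : P * P = 1) (hB : B.IsHermitian)
    (ψ : Fin m → ℂ) (hψ : star ψ ⬝ᵥ ψ = 1)
    (f : ℝ → ℝ)
    (hf : ∀ θ : ℝ, (f θ : ℂ) = star ψ ⬝ᵥ
      ((NormedSpace.exp (((θ : ℂ) / 2) • (Complex.I • P)) * B *
        NormedSpace.exp ((-(θ : ℂ) / 2) • (Complex.I • P))) *ᵥ ψ))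
    (θ : ℝ) :
    HasDerivAt f ((f (θ + Real.pi / 2) - f (θ - Real.pi / 2)) / 2) θ :=
  stmt_18_general m P B hP2 ψ f hf θ
end
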